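/- arXiv:2507.09520 — 2 statements merged into one kernel-verified Lean document; each statement's English description precedes it below -/
import Mathlib

section
/- Substituting q = 1 into D yields zero; that is, the multivariate polynomials obtained from T_{{e}}^{{f}} · T_{{f}}^{{e}} and from T_{{e,f}}^{∅} · T_{∅}^{{e,f}} by evaluating q at 1 are equal. -/
open Finset

section Defs

variable {V : Type*} {E : Type*}

/-- The graph on vertex set `V` whose adjacency is given by the edges in `F`
(a loop joins nothing). -/
def etaGraph (ends : E → Sym2 V) (F : Finset E) : SimpleGraph V where
  Adj v w := v ≠ w ∧ ∃ g ∈ F, ends g = s(v, w)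
  symm := ⟨by
    rintro v w ⟨hvw, g, hg, hends⟩
    exact ⟨hvw.symm, g, hg, by rw [hends, Sym2.eq_swap]⟩⟩
  loopless := ⟨by rintro v ⟨h, -⟩; exact h rfl⟩

/-- `k(F)`: the number of connected components of `η(F)`. -/
noncomputable def kComp (ends : E → Sym2 V) (F : Finset E) : ℕ :=
  Nat.card (etaGraph ends F).ConnectedComponent

/-- The edge with endpoint pair `s` joins the connected component of `a`
with that of `b` in the graph `G`. -/
def Joins (G : SimpleGraph V) (s : Sym2 V) (a b : V) : Prop :=
  ∃ u v : V, s = s(u, v) ∧ G.Reachable a u ∧ G.Reachable b v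

/-- `F ⊆ E^{ef}` is a paracel if `e` and `f` each join the same two distinct
connected components of `η(F)`. -/
def IsParacel (ends : E → Sym2 V) (e f : E) (F : Finset E) : Prop :=
  e ∉ F ∧ f ∉ F ∧ ∃ a b : V,
    ¬ (etaGraph ends F).Reachable a b ∧
    Joins (etaGraph ends F) (ends e) a b ∧
    Joins (etaGraph ends F) (ends f) a b

/-- `g ∈ E^{ef} ∖ F` is a smoot for the paracel `F` if it joins the same two
connected components of `η(F)` as `e` and `f` do. -/
def IsSmoot (ends : E → Sym2 V) (e f : E) (F : Finset E) (g : E) : Prop :=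
  g ∉ F ∧ g ≠ e ∧ g ≠ f ∧ ∃ a b : V,
    ¬ (etaGraph ends F).Reachable a b ∧
    Joins (etaGraph ends F) (ends e) a b ∧
    Joins (etaGraph ends F) (ends f) a b ∧
    Joins (etaGraph ends F) (ends g) a b

variable [DecidableEq E]

/-- `α` is compatible with `(β, γ)`. -/
def Compatible (ends : E → Sym2 V) (e f : E) (β γ α : Finset E) : Prop :=
  e ∉ α ∧ f ∉ α ∧ Disjoint α β ∧ Disjoint α γ ∧
    IsParacel ends e f (γ ∪ α) ∧ ∀ g ∈ β, IsSmoot ends e f (γ ∪ α) g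

/-- indicator function of a finite edge set, as an exponent vector. -/
def indic (A : Finset E) : E → ℕ := fun g => if g ∈ A then 1 else 0

/-- `B_{β,γ}` as a set of exponent vectors `1_α + 1_{α'}` for twins `α, α'`. -/
def Bset (ends : E → Sym2 V) (e f : E) (β γ : Finset E) : Set (E → ℕ) :=
  { d | ∃ α α' : Finset E,
      Compatible ends e f β γ α ∧ Compatible ends e f β γ α' ∧
      Compatible ends e f β γ (α ∩ α') ∧ d = indic α + indic α' }

/-- `x^F = ∏_{g ∈ F} x_g`. -/
noncomputable def xF (A : Finset E) : MvPolynomial E ℤ := ∏ g ∈ A, MvPolynomial.X g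

variable [Fintype E]

/-- `E^{ef} = E ∖ {e, f}`. -/
def Eef (e f : E) : Finset E := Finset.univ \ {e, f}

/-- `x^d = ∏_g x_g^{d g}` for an exponent vector `d`. -/
noncomputable def xPow (d : E → ℕ) : MvPolynomial E ℤ := ∏ g : E, MvPolynomial.X g ^ d g

/-- `B_{β,γ}` as a finite set of exponent vectors, each counted once. -/
noncomputable def Bfin (ends : E → Sym2 V) (e f : E) (β γ : Finset E) :
    Finset (E → ℕ) := by
  classical
  exact (Finset.univ.filter (fun p : Finset E × Finset E =>
      Compatible ends e f β γ p.1 ∧ Compatible ends e f β γ p.2 ∧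
      Compatible ends e f β γ (p.1 ∩ p.2))).image fun p => indic p.1 + indic p.2

/-- `T_A^B = Σ_{A ⊆ F, F ∩ B = ∅} x^F q^{k(F)}` in `R = (MvPolynomial E ℤ)[q]`. -/
noncomputable def Tab (ends : E → Sym2 V) (A B : Finset E) :
    Polynomial (MvPolynomial E ℤ) :=
  ∑ F ∈ Finset.univ.filter (fun F : Finset E => A ⊆ F ∧ F ∩ B = ∅),
    Polynomial.C (xF F) * Polynomial.X ^ kComp ends F

/-- `D = T_e^f T_f^e − T_{ef} T^{ef}`. -/
noncomputable def Dpoly (ends : E → Sym2 V) (e f : E) :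
    Polynomial (MvPolynomial E ℤ) :=
  Tab ends {e} {f} * Tab ends {f} {e} - Tab ends {e, f} ∅ * Tab ends ∅ {e, f}

/-- The combinatorial sum
`S = Σ_{(β,γ) disjoint ⊆ E^{ef}} x^β x^γ Σ_{d ∈ B_{β,γ}} x^d`. -/
noncomputable def Ssum (ends : E → Sym2 V) (e f : E) : MvPolynomial E ℤ := by
  classical
  exact ∑ p ∈ Finset.univ.filter (fun p : Finset E × Finset E =>
      p.1 ⊆ Eef e f ∧ p.2 ⊆ Eef e f ∧ Disjoint p.1 p.2),
    xF p.1 * xF p.2 * ∑ d ∈ Bfin ends e f p.1 p.2, xPow d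

/-- `k₁(A,B) = k(A+e) + k(B+f)`. -/
noncomputable def kOne (ends : E → Sym2 V) (e f : E) (A B : Finset E) : ℕ :=
  kComp ends (insert e A) + kComp ends (insert f B)

/-- `k₂(A,B) = k(A+e+f) + k(B)`. -/
noncomputable def kTwo (ends : E → Sym2 V) (e f : E) (A B : Finset E) : ℕ :=
  kComp ends (insert f (insert e A)) + kComp ends B

/-- The coefficient of the monomial `x^lam` in an element of
`(MvPolynomial E ℤ)[q]`, as an element of `ℤ[q]`. -/
noncomputable def monCoeff (P : Polynomial (MvPolynomial E ℤ)) (lam : E →₀ ℕ) :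
    Polynomial ℤ :=
  P.sum fun n c => Polynomial.C (MvPolynomial.coeff lam c) * Polynomial.X ^ n

end Defs
theorem eval1_Tab {V E : Type*} [Fintype V] [Fintype E] [DecidableEq E]
    (ends : E → Sym2 V) (A B : Finset E) :
    Polynomial.eval 1 (Tab ends A B) =
      ∑ F ∈ Finset.univ.filter (fun F : Finset E => A ⊆ F ∧ F ∩ B = ∅), xF F := by
  simp [Tab, Polynomial.eval_finset_sum]

theorem key_eq {V E : Type*} [Fintype V] [Fintype E] [DecidableEq E]
    (ends : E → Sym2 V) (e f : E) (hef : e ≠ f) :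
    Polynomial.eval 1 (Tab ends {e} {f} * Tab ends {f} {e}) =
      Polynomial.eval 1 (Tab ends {e, f} ∅ * Tab ends ∅ {e, f}) := by
  classical
  simp only [Polynomial.eval_mul, eval1_Tab]
  rw [Finset.sum_mul_sum, Finset.sum_mul_sum]
  rw [← Finset.sum_product', ← Finset.sum_product']
  refine Finset.sum_bij' (fun p _ => (insert f p.1, p.2.erase f))
    (fun p _ => (p.1.erase f, insert f p.2)) ?_ ?_ ?_ ?_ ?_
  all_goals
    rintro ⟨F, G⟩ hp
    simp only [Finset.mem_product, Finset.mem_filter, Finset.mem_univ, true_and,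
      ← Finset.disjoint_iff_inter_eq_empty, Finset.singleton_subset_iff,
      Finset.insert_subset_iff, Finset.disjoint_singleton_right,
      Finset.disjoint_insert_right, Finset.empty_subset, Finset.disjoint_empty_right,
      Finset.mem_insert, Finset.mem_erase, true_and, and_true] at hp
  · simp only [Finset.mem_product, Finset.mem_filter, Finset.mem_univ, true_and,
      ← Finset.disjoint_iff_inter_eq_empty, Finset.singleton_subset_iff,
      Finset.insert_subset_iff, Finset.disjoint_singleton_right,
      Finset.disjoint_insert_right, Finset.empty_subset, Finset.disjoint_empty_right,
      Finset.mem_insert, Finset.mem_erase, true_and, and_true]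
    tauto
  · simp only [Finset.mem_product, Finset.mem_filter, Finset.mem_univ, true_and,
      ← Finset.disjoint_iff_inter_eq_empty, Finset.singleton_subset_iff,
      Finset.insert_subset_iff, Finset.disjoint_singleton_right,
      Finset.disjoint_insert_right, Finset.empty_subset, Finset.disjoint_empty_right,
      Finset.mem_insert, Finset.mem_erase, true_and, and_true]
    tauto
  · obtain ⟨⟨heF, hfF⟩, hfG, heG⟩ := hp
    simp [Finset.erase_insert hfF, Finset.insert_erase hfG]
  · obtain ⟨⟨heF, hfF⟩, heG, hfG⟩ := hp
    simp [Finset.insert_erase hfF, Finset.erase_insert hfG]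
  · obtain ⟨⟨heF, hfF⟩, hfG, heG⟩ := hp
    simp only [xF]
    rw [Finset.prod_insert hfF, ← Finset.mul_prod_erase G _ hfG]
    ring

/-- Substituting `q = 1` into `D` yields zero, i.e. the evaluations at
`q = 1` of `T_e^f · T_f^e` and of `T_{ef} · T^{ef}` agree. -/
theorem stmt2 {V E : Type*} [Fintype V] [Fintype E] [DecidableEq E]
    (ends : E → Sym2 V) (e f : E) (hef : e ≠ f) :
    Polynomial.eval 1 (Dpoly ends e f) = 0 ∧
    Polynomial.eval 1 (Tab ends {e} {f} * Tab ends {f} {e}) =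
      Polynomial.eval 1 (Tab ends {e, f} ∅ * Tab ends ∅ {e, f}) := by
  have h := key_eq ends e f hef
  exact ⟨by simp [Dpoly, h], h⟩
end

section
/- The complementation map A ↦ E^{ef} ∖ A is a bijection from the set {A ⊆ E^{ef} : the pair (A, E^{ef} ∖ A) is negative} onto the set {A ⊆ E^{ef} : the pair (A, E^{ef} ∖ A) is positive and neither A nor E^{ef} ∖ A is a paracel}. -/
open Finset

section AuxProofs

open SimpleGraph

variable {V : Type*} {E : Type*} [DecidableEq E]

lemma etaGraph_mono' (ends : E → Sym2 V) {F F' : Finset E} (h : F ⊆ F') :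
    etaGraph ends F ≤ etaGraph ends F' := by
  rintro v w ⟨hne, g, hg, hgs⟩
  exact ⟨hne, g, h hg, hgs⟩

lemma reach_insert' {ends : E → Sym2 V} {F : Finset E} {g : E} {p q a b : V}
    (hg : ends g = s(p, q))
    (h : (etaGraph ends (insert g F)).Reachable a b) :
    (etaGraph ends F).Reachable a b ∨
      ((etaGraph ends F).Reachable a p ∧ (etaGraph ends F).Reachable q b) ∨
      ((etaGraph ends F).Reachable a q ∧ (etaGraph ends F).Reachable p b) := by
  obtain ⟨w⟩ := h
  induction w with
  | nil => exact Or.inl (Reachable.refl _)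
  | @cons x y z h' w ih =>
    obtain ⟨hne, g', hg', hgs⟩ := h'
    rcases Finset.mem_insert.mp hg' with rfl | hg'F
    · rw [hg] at hgs
      rcases Sym2.eq_iff.mp hgs.symm with ⟨rfl, rfl⟩ | ⟨rfl, rfl⟩
      · rcases ih with h1 | ⟨h1, h2⟩ | ⟨h1, h2⟩
        · exact Or.inr (Or.inl ⟨Reachable.refl _, h1⟩)
        · exact Or.inr (Or.inl ⟨Reachable.refl _, h2⟩)
        · exact Or.inl h2
      · rcases ih with h1 | ⟨h1, h2⟩ | ⟨h1, h2⟩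
        · exact Or.inr (Or.inr ⟨Reachable.refl _, h1⟩)
        · exact Or.inl h2
        · exact Or.inr (Or.inr ⟨Reachable.refl _, h2⟩)
    · have hadj : (etaGraph ends F).Adj x y := ⟨hne, g', hg'F, hgs⟩
      rcases ih with h1 | ⟨h1, h2⟩ | ⟨h1, h2⟩
      · exact Or.inl (hadj.reachable.trans h1)
      · exact Or.inr (Or.inl ⟨hadj.reachable.trans h1, h2⟩)
      · exact Or.inr (Or.inr ⟨hadj.reachable.trans h1, h2⟩)

lemma kComp_insert_of_reachable' {ends : E → Sym2 V} {F : Finset E} {g : E} {p q : V}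
    (hg : ends g = s(p, q)) (h : (etaGraph ends F).Reachable p q) :
    kComp ends (insert g F) = kComp ends F := by
  have hiff : ∀ a b : V, (etaGraph ends (insert g F)).Reachable a b ↔
      (etaGraph ends F).Reachable a b := by
    intro a b
    constructor
    · intro hr
      rcases reach_insert' hg hr with h1 | ⟨h1, h2⟩ | ⟨h1, h2⟩
      · exact h1
      · exact h1.trans (h.trans h2)
      · exact h1.trans (h.symm.trans h2)
    · exact fun hr => hr.mono (etaGraph_mono' ends (Finset.subset_insert g F))
  exact Nat.card_congr (Quot.congrRight hiff)

lemma kComp_insert_of_not_reachable' [Fintype V] {ends : E → Sym2 V} {F : Finset E} {g : E}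
    {p q : V} (hg : ends g = s(p, q)) (h : ¬ (etaGraph ends F).Reachable p q) :
    kComp ends F = kComp ends (insert g F) + 1 := by
  classical
  set G := etaGraph ends F with hG
  set G' := etaGraph ends (insert g F) with hG'
  have hle : G ≤ G' := etaGraph_mono' ends (Finset.subset_insert g F)
  have hpq : p ≠ q := by rintro rfl; exact h (Reachable.refl _)
  have hadj : G'.Adj p q := ⟨hpq, g, Finset.mem_insert_self g F, hg⟩
  set φ : G.ConnectedComponent → G'.ConnectedComponent :=
    ConnectedComponent.map (Hom.ofLE hle) with hφ
  have hφmk : ∀ x : V, φ (G.connectedComponentMk x) = G'.connectedComponentMk x := by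
    intro x; rfl
  set ψ : {c : G.ConnectedComponent // c ≠ G.connectedComponentMk q} →
      G'.ConnectedComponent := fun c => φ c.1 with hψ
  have hinj : Function.Injective ψ := by
    rintro ⟨c1, h1⟩ ⟨c2, h2⟩ heq
    induction c1 using ConnectedComponent.ind with | _ x =>
    induction c2 using ConnectedComponent.ind with | _ y =>
    simp only [hψ, hφmk] at heq
    have hr : G'.Reachable x y := ConnectedComponent.eq.mp heq
    rcases reach_insert' hg hr with hr1 | ⟨hr1, hr2⟩ | ⟨hr1, hr2⟩
    · exact Subtype.ext (ConnectedComponent.eq.mpr hr1)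
    · exact absurd (ConnectedComponent.eq.mpr hr2.symm) h2
    · exact absurd (ConnectedComponent.eq.mpr hr1) h1
  have hsurj : Function.Surjective ψ := by
    intro d
    induction d using ConnectedComponent.ind with | _ x =>
    by_cases hx : G.Reachable x q
    · refine ⟨⟨G.connectedComponentMk p, fun hc => h (ConnectedComponent.eq.mp hc)⟩, ?_⟩
      simp only [hψ, hφmk]
      exact ConnectedComponent.eq.mpr (hadj.reachable.trans ((hx.mono hle).symm))
    · exact ⟨⟨G.connectedComponentMk x, fun hc => hx (ConnectedComponent.eq.mp hc)⟩,
        by simp only [hψ, hφmk]⟩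
  have hcard : Nat.card {c : G.ConnectedComponent // c ≠ G.connectedComponentMk q} =
      Nat.card G'.ConnectedComponent := Nat.card_eq_of_bijective ψ ⟨hinj, hsurj⟩
  haveI : Unique {c : G.ConnectedComponent // c = G.connectedComponentMk q} :=
    ⟨⟨⟨G.connectedComponentMk q, rfl⟩⟩, by rintro ⟨x, rfl⟩; rfl⟩
  have hsum : Nat.card {c : G.ConnectedComponent // c = G.connectedComponentMk q} +
      Nat.card {c : G.ConnectedComponent // c ≠ G.connectedComponentMk q} =
      Nat.card G.ConnectedComponent := by
    rw [← Nat.card_sum]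
    exact Nat.card_congr (Equiv.sumCompl _)
  rw [Nat.card_unique] at hsum
  have : Nat.card G.ConnectedComponent = Nat.card G'.ConnectedComponent + 1 := by omega
  exact this

lemma isParacel_iff' {ends : E → Sym2 V} {e f : E} {F : Finset E}
    (he : e ∉ F) (hf : f ∉ F) {u v : V} (hfuv : ends f = s(u, v)) :
    IsParacel ends e f F ↔
      (¬ (etaGraph ends F).Reachable u v ∧ (etaGraph ends (insert e F)).Reachable u v) := by
  constructor
  · rintro ⟨-, -, a, b, hab, ⟨p, q, hepq, hap, hbq⟩, ⟨u', v', hfu', hau', hbv'⟩⟩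
    have hle := etaGraph_mono' ends (Finset.subset_insert e F)
    have hpq : p ≠ q := by rintro rfl; exact hab (hap.trans hbq.symm)
    have hadj : (etaGraph ends (insert e F)).Adj p q :=
      ⟨hpq, e, Finset.mem_insert_self e F, hepq⟩
    have hchain : ∀ x y : V, (etaGraph ends F).Reachable a x →
        (etaGraph ends F).Reachable b y →
        (etaGraph ends (insert e F)).Reachable x y := by
      intro x y hx hy
      exact ((hx.mono hle).symm.trans (hap.mono hle)).trans
        (hadj.reachable.trans ((hbq.mono hle).symm.trans (hy.mono hle)))
    rcases Sym2.eq_iff.mp (hfuv.symm.trans hfu') with ⟨rfl, rfl⟩ | ⟨rfl, rfl⟩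
    · exact ⟨fun hr => hab (hau'.trans (hr.trans hbv'.symm)), hchain u v hau' hbv'⟩
    · exact ⟨fun hr => hab (hau'.trans (hr.symm.trans hbv'.symm)),
        (hchain v u hau' hbv').symm⟩
  · rintro ⟨h1, h2⟩
    obtain ⟨p, q, hepq⟩ : ∃ p q, ends e = s(p, q) :=
      Sym2.inductionOn (f := fun s => ∃ p q, s = s(p, q)) (ends e) (fun p q => ⟨p, q, rfl⟩)
    refine ⟨he, hf, u, v, h1, ?_, ⟨u, v, hfuv, Reachable.refl _, Reachable.refl _⟩⟩
    rcases reach_insert' hepq h2 with hr | ⟨hr1, hr2⟩ | ⟨hr1, hr2⟩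
    · exact absurd hr h1
    · exact ⟨p, q, hepq, hr1, hr2.symm⟩
    · exact ⟨q, p, hepq.trans (Sym2.eq_swap), hr1, hr2.symm⟩

lemma main_iff' [Fintype V] [Fintype E] (ends : E → Sym2 V) (e f : E)
    (A B : Finset E) (heA : e ∉ A) (hfA : f ∉ A) (heB : e ∉ B) (hfB : f ∉ B) :
    ((kOne ends e f A B : ℤ) - kTwo ends e f A B = 1) ↔
      (((kOne ends e f B A : ℤ) - kTwo ends e f B A = -1) ∧
        ¬ IsParacel ends e f B ∧ ¬ IsParacel ends e f A) := by
  classical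
  obtain ⟨u, v, hfuv⟩ : ∃ u v, ends f = s(u, v) :=
    Sym2.inductionOn (f := fun s => ∃ p q, s = s(p, q)) (ends f) (fun p q => ⟨p, q, rfl⟩)
  have key : ∀ X Y : Finset E, (kOne ends e f X Y : ℤ) - kTwo ends e f X Y =
      (if (etaGraph ends (insert e X)).Reachable u v then 0 else 1) -
      (if (etaGraph ends Y).Reachable u v then 0 else 1) := by
    intro X Y
    unfold kOne kTwo
    by_cases h1 : (etaGraph ends (insert e X)).Reachable u v <;>
      by_cases h2 : (etaGraph ends Y).Reachable u v
    · rw [kComp_insert_of_reachable' hfuv h1, kComp_insert_of_reachable' hfuv h2]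
      simp [h1, h2]
    · rw [kComp_insert_of_reachable' hfuv h1,
        kComp_insert_of_not_reachable' (g := f) hfuv h2]
      simp [h1, h2]
    · rw [kComp_insert_of_reachable' hfuv h2,
        kComp_insert_of_not_reachable' (g := f) hfuv h1]
      simp [h1, h2]
    · rw [kComp_insert_of_not_reachable' (g := f) hfuv h1,
        kComp_insert_of_not_reachable' (g := f) hfuv h2]
      simp [h1, h2]
      ring
  have mono : ∀ Y : Finset E, (etaGraph ends Y).Reachable u v →
      (etaGraph ends (insert e Y)).Reachable u v := fun Y h =>
    h.mono (etaGraph_mono' ends (Finset.subset_insert e Y))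
  rw [key A B, key B A, isParacel_iff' heB hfB hfuv, isParacel_iff' heA hfA hfuv]
  have mA := mono A
  have mB := mono B
  by_cases h1 : (etaGraph ends (insert e A)).Reachable u v <;>
    by_cases h2 : (etaGraph ends B).Reachable u v <;>
    by_cases h3 : (etaGraph ends (insert e B)).Reachable u v <;>
    by_cases h4 : (etaGraph ends A).Reachable u v <;>
    simp [h1, h2, h3, h4] <;> tauto

end AuxProofs

/-- complementation `A ↦ E^{ef} ∖ A` is a bijection from the negative
pairs `(A, E^{ef} ∖ A)` onto the positive pairs `(A, E^{ef} ∖ A)` for which neither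
`A` nor `E^{ef} ∖ A` is a paracel. -/
theorem stmt12 {V E : Type*} [Fintype V] [Fintype E] [DecidableEq E]
    (ends : E → Sym2 V) (e f : E) (hef : e ≠ f) :
    Set.BijOn (fun A : Finset E => Eef e f \ A)
      {A : Finset E | A ⊆ Eef e f ∧
        (kOne ends e f A (Eef e f \ A) : ℤ) - (kTwo ends e f A (Eef e f \ A) : ℤ) = 1}
      {A : Finset E | A ⊆ Eef e f ∧
        (kOne ends e f A (Eef e f \ A) : ℤ) - (kTwo ends e f A (Eef e f \ A) : ℤ) = -1 ∧
        ¬ IsParacel ends e f A ∧ ¬ IsParacel ends e f (Eef e f \ A)} := by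
  classical
  have hinv : ∀ A : Finset E, A ⊆ Eef e f → Eef e f \ (Eef e f \ A) = A := by
    intro A hA
    exact Finset.sdiff_sdiff_eq_self hA
  have hmem : ∀ A : Finset E, A ⊆ Eef e f → e ∉ A ∧ f ∉ A := by
    intro A hA
    constructor <;> intro hx <;>
      · have := hA hx
        simp [Eef] at this
  refine ⟨?_, ?_, ?_⟩
  · rintro A ⟨hAsub, hk⟩
    obtain ⟨heA, hfA⟩ := hmem A hAsub
    have hBsub : Eef e f \ A ⊆ Eef e f := Finset.sdiff_subset
    obtain ⟨heB, hfB⟩ := hmem _ hBsub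
    obtain ⟨hk', hpB, hpA⟩ := (main_iff' ends e f A (Eef e f \ A) heA hfA heB hfB).mp hk
    refine ⟨hBsub, ?_, hpB, ?_⟩
    · rwa [hinv A hAsub]
    · rwa [hinv A hAsub]
  · rintro A ⟨hAsub, -⟩ A' ⟨hA'sub, -⟩ heq
    have : Eef e f \ (Eef e f \ A) = Eef e f \ (Eef e f \ A') := by
      simpa using congrArg (Eef e f \ ·) heq
    rwa [hinv A hAsub, hinv A' hA'sub] at this
  · rintro A' ⟨hsub, hk, hp1, hp2⟩
    have hBsub : Eef e f \ A' ⊆ Eef e f := Finset.sdiff_subset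
    obtain ⟨heA, hfA⟩ := hmem _ hBsub
    obtain ⟨heB, hfB⟩ := hmem A' hsub
    refine ⟨Eef e f \ A', ⟨hBsub, ?_⟩, hinv A' hsub⟩
    rw [hinv A' hsub]
    exact (main_iff' ends e f (Eef e f \ A') A' heA hfA heB hfB).mpr ⟨hk, hp1, hp2⟩
end
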